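/- arXiv:1910.10112 — 5 statements merged into one kernel-verified Lean document; each statement's English description precedes it below -/
import Mathlib

section
/- In the free group F on three generators a, b, c, the homomorphism F → H_d (where H_d = ⟨a,b,c ∣ a², b², c², (ab)³, (ac)², (bc)^d, (bac)^d⟩) sending a ↦ a, b ↦ b, c ↦ ac factors through the quotient defining H_d, inducing a well-defined group homomorphism # : H_d → H_d with a ↦ a, b ↦ b, c ↦ ac. -/
/-- Relators of the geodesic triangle group
`H_d = ⟨a,b,c ∣ a², b², c², (ab)³, (ac)², (bc)^d, (bac)^d⟩`,
with `a = of 0`, `b = of 1`, `c = of 2`. -/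
def geoRels (d : ℕ) : Set (FreeGroup (Fin 3)) :=
  {(FreeGroup.of 0)^2, (FreeGroup.of 1)^2, (FreeGroup.of 2)^2,
   (FreeGroup.of 0 * FreeGroup.of 1)^3, (FreeGroup.of 0 * FreeGroup.of 2)^2,
   (FreeGroup.of 1 * FreeGroup.of 2)^d,
   (FreeGroup.of 1 * FreeGroup.of 0 * FreeGroup.of 2)^d}

/-- The geodesic triangle group `H_d`. -/
abbrev H (d : ℕ) := PresentedGroup (geoRels d)

/-- The substitution `a ↦ a`, `b ↦ b`, `c ↦ ac` on the free group
factors through the defining relations of `H_d`, giving a well-defined group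
homomorphism `# : H_d → H_d`. -/
theorem geodesicAutomorphism_exists (d : ℕ) :
    ∃ φ : H d →* H d,
      φ (PresentedGroup.of 0) = PresentedGroup.of 0 ∧
      φ (PresentedGroup.of 1) = PresentedGroup.of 1 ∧
      φ (PresentedGroup.of 2) = PresentedGroup.of 0 * PresentedGroup.of 2 := by
  classical
  set a : H d := PresentedGroup.of 0 with ha_def
  set b : H d := PresentedGroup.of 1 with hb_def
  set c : H d := PresentedGroup.of 2 with hc_def
  have hrel : ∀ r ∈ geoRels d, PresentedGroup.mk (geoRels d) r = 1 := fun r hr =>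
    (QuotientGroup.eq_one_iff r).mpr (Subgroup.subset_normalClosure hr)
  have hmk : ∀ i : Fin 3, PresentedGroup.mk (geoRels d) (FreeGroup.of i) =
      (PresentedGroup.of i : H d) := fun _ => rfl
  have ha : a ^ 2 = 1 := by
    have := hrel _ (show (FreeGroup.of 0)^2 ∈ geoRels d by simp [geoRels])
    simpa [map_pow, hmk] using this
  have hbb : b ^ 2 = 1 := by
    have := hrel _ (show (FreeGroup.of 1)^2 ∈ geoRels d by simp [geoRels])
    simpa [map_pow, hmk] using this
  have hcc : c ^ 2 = 1 := by
    have := hrel _ (show (FreeGroup.of 2)^2 ∈ geoRels d by simp [geoRels])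
    simpa [map_pow, hmk] using this
  have hab : (a * b) ^ 3 = 1 := by
    have := hrel _ (show (FreeGroup.of 0 * FreeGroup.of 1)^3 ∈ geoRels d by simp [geoRels])
    simpa [map_pow, map_mul, hmk] using this
  have hac : (a * c) ^ 2 = 1 := by
    have := hrel _ (show (FreeGroup.of 0 * FreeGroup.of 2)^2 ∈ geoRels d by simp [geoRels])
    simpa [map_pow, map_mul, hmk] using this
  have hbc : (b * c) ^ d = 1 := by
    have := hrel _ (show (FreeGroup.of 1 * FreeGroup.of 2)^d ∈ geoRels d by simp [geoRels])
    simpa [map_pow, map_mul, hmk] using this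
  have hbac : (b * a * c) ^ d = 1 := by
    have := hrel _ (show (FreeGroup.of 1 * FreeGroup.of 0 * FreeGroup.of 2)^d ∈ geoRels d by
      simp [geoRels])
    simpa [map_pow, map_mul, hmk] using this
  set f : Fin 3 → H d := ![a, b, a * c] with hf
  have haa : a * a = 1 := by rw [← sq]; exact ha
  have hcheck : ∀ r ∈ geoRels d, FreeGroup.lift f r = 1 := by
    intro r hr
    rcases hr with h | h | h | h | h | h | h <;> subst h <;>
      simp only [map_pow, map_mul, FreeGroup.lift_apply_of, hf, Matrix.cons_val_zero,
        Matrix.cons_val_one, Matrix.head_cons, Matrix.cons_val_two, Matrix.tail_cons]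
    · exact ha
    · exact hbb
    · exact hac
    · exact hab
    · have : a * (a * c) = c := by rw [← mul_assoc, haa, one_mul]
      rw [this]; exact hcc
    · have : b * (a * c) = b * a * c := by rw [mul_assoc]
      rw [this]; exact hbac
    · have : b * a * (a * c) = b * c := by
        rw [mul_assoc b a, ← mul_assoc a a, haa, one_mul]
      rw [this]; exact hbc
  refine ⟨PresentedGroup.toGroup hcheck, ?_, ?_, ?_⟩
  · exact (PresentedGroup.toGroup.of hcheck).trans (by simp [hf])
  · exact (PresentedGroup.toGroup.of hcheck).trans (by simp [hf])
  · exact (PresentedGroup.toGroup.of hcheck).trans (by simp [hf, Matrix.cons_val_two])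
end

section
/- In H_d = ⟨a,b,c ∣ a², b², c², (ab)³, (ac)², (bc)^d, (bac)^d⟩, for every natural number k one has (bc)^k = 1 if and only if (bac)^k = 1. -/
/-! With `a, b, c = of 0, of 1, of 2`: since `a² = 1`, the substitution `c ↦ ac` maps the defining
relators of `H_d` to relators (it swaps the last two and the two squares `c²`, `(ac)²`), so it
defines an endomorphism of `H_d`, and this endomorphism exchanges `bc` and `bac`. -/

theorem pow_eq_one_iff_of_map_eq_of_map_eq {M : Type*} [Monoid M] (f : M →* M) {x y : M}
    (hxy : f x = y) (hyx : f y = x) (k : ℕ) : x ^ k = 1 ↔ y ^ k = 1 :=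
  ⟨fun h => by rw [← hxy, ← map_pow, h, map_one], fun h => by rw [← hyx, ← map_pow, h, map_one]⟩

namespace H

open PresentedGroup

variable (d : ℕ)

theorem relations :
    (of 0 : H d) ^ 2 = 1 ∧ (of 1 : H d) ^ 2 = 1 ∧ (of 2 : H d) ^ 2 = 1 ∧
      ((of 0 : H d) * of 1) ^ 3 = 1 ∧ ((of 0 : H d) * of 2) ^ 2 = 1 ∧
      ((of 1 : H d) * of 2) ^ d = 1 ∧ ((of 1 : H d) * of 0 * of 2) ^ d = 1 := by
  refine ⟨?_, ?_, ?_, ?_, ?_, ?_, ?_⟩ <;> exact one_of_mem (by simp [geoRels])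

theorem of_zero_mul_of_zero_mul (g : H d) : of 0 * (of 0 * g) = g := by
  rw [← mul_assoc, ← pow_two, (relations d).1, one_mul]

def twistImage : Fin 3 → H d := ![of 0, of 1, of 0 * of 2]

theorem lift_twistImage_eq_one : ∀ r ∈ geoRels d, FreeGroup.lift (twistImage d) r = 1 := by
  obtain ⟨ha, hb, hc, hab, hac, hbc, hbac⟩ := relations d
  intro r hr
  simp only [geoRels, Set.mem_insert_iff, Set.mem_singleton_iff] at hr
  rcases hr with rfl | rfl | rfl | rfl | rfl | rfl | rfl <;>
    simp only [map_pow, map_mul, FreeGroup.lift_apply_of, twistImage, Matrix.cons_val_zero,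
      Matrix.cons_val_one, Matrix.cons_val_two, Matrix.head_cons, Matrix.tail_cons]
  exacts [ha, hb, hac, hab, by rwa [of_zero_mul_of_zero_mul], by rwa [← mul_assoc],
    by rwa [mul_assoc, of_zero_mul_of_zero_mul]]

def twist : H d →* H d := toGroup (lift_twistImage_eq_one d)

theorem twist_of (i : Fin 3) : twist d (of i) = twistImage d i := toGroup.of _

theorem twist_bc : twist d (of 1 * of 2) = of 1 * of 0 * of 2 := by
  simp [twist_of, twistImage, mul_assoc]

theorem twist_bac : twist d (of 1 * of 0 * of 2) = of 1 * of 2 := by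
  simp [twist_of, twistImage, mul_assoc, of_zero_mul_of_zero_mul]

end H

/-- In `H_d`, for every `k : ℕ`, `(bc)^k = 1 ↔ (bac)^k = 1`
(with `a = of 0`, `b = of 1`, `c = of 2`). -/
theorem bc_pow_eq_one_iff_bac_pow_eq_one (d k : ℕ) :
    ((PresentedGroup.of 1 * PresentedGroup.of 2 : H d)^k = 1) ↔
    ((PresentedGroup.of 1 * PresentedGroup.of 0 * PresentedGroup.of 2 : H d)^k = 1) :=
  pow_eq_one_iff_of_map_eq_of_map_eq (H.twist d) (H.twist_bc d) (H.twist_bac d) k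
end

section
/- Suppose H_d = H_k with d = k·p for a prime p, and z divides k with p not dividing z. Then k/z = gcd(k, d/z), and consequently H_{d/z} = H_{k/z}. -/
/-- `H_d = H_k`: the identity map on generators induces an isomorphism. -/
def HEq' (d k : ℕ) : Prop :=
  ∃ φ : H d →* H k,
    (∀ i : Fin 3, φ (PresentedGroup.of i) = PresentedGroup.of i) ∧
    Function.Bijective φ

/-!
An isomorphism `H_d ≅ H_k` fixing the generators forces `(bc)^k = (bac)^k = 1` in `H_d`, hence in
every quotient `H_n` with `n ∣ d`. There `(bc)^n = (bac)^n = 1` as well, so the `gcd(k, n)`-th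
powers vanish too: all relations of `H_{gcd(k,n)}` hold in `H_n`, and the quotient map
`H_n → H_{gcd(k,n)}` has an inverse. For `n = d/z = kp/z` with `p ∤ z`, `gcd(k, n) = k/z`.
-/

theorem div_eq_gcd_mul_div_of_coprime {k p z : ℕ} (hz : z ∣ k) (hpz : p.Coprime z) :
    k / z = k.gcd (k * p / z) := by
  obtain ⟨m, rfl⟩ := hz
  rcases Nat.eq_zero_or_pos z with rfl | hz0
  · simp
  · rw [Nat.mul_div_cancel_left m hz0, mul_assoc, Nat.mul_div_cancel_left _ hz0, mul_comm z m,
      Nat.gcd_mul_left, hpz.symm.gcd_eq_one, mul_one]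

namespace H

open PresentedGroup

/-- The generators of `H t` satisfy the relations of `H n`; only the two `n`-th power relations
depend on `n`. -/
def PowRelsHold (n t : ℕ) : Prop :=
  ((of 1 : H t) * of 2) ^ n = 1 ∧ ((of 1 : H t) * of 0 * of 2) ^ n = 1

lemma lift_of_eq_one {t : ℕ} {r : FreeGroup (Fin 3)} (hr : r ∈ geoRels t) :
    FreeGroup.lift (of : Fin 3 → H t) r = 1 := by
  rw [show FreeGroup.lift (of : Fin 3 → H t) = mk (geoRels t) from
    FreeGroup.ext_hom _ _ fun _ => rfl]
  exact one_of_mem hr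

lemma powRelsHold_self (t : ℕ) : PowRelsHold t t := by
  have hbc := lift_of_eq_one (t := t) (r := (FreeGroup.of 1 * FreeGroup.of 2) ^ t)
    (by simp [geoRels])
  have hbac := lift_of_eq_one (t := t) (r := (FreeGroup.of 1 * FreeGroup.of 0 * FreeGroup.of 2) ^ t)
    (by simp [geoRels])
  simp only [map_pow, map_mul, FreeGroup.lift_apply_of] at hbc hbac
  exact ⟨hbc, hbac⟩

namespace PowRelsHold

variable {n m t s : ℕ}

lemma of_dvd (h : PowRelsHold n t) (hnm : n ∣ m) : PowRelsHold m t := by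
  obtain ⟨c, rfl⟩ := hnm
  exact ⟨by rw [pow_mul, h.1, one_pow], by rw [pow_mul, h.2, one_pow]⟩

lemma gcd (hn : PowRelsHold n t) (hm : PowRelsHold m t) : PowRelsHold (n.gcd m) t :=
  ⟨pow_gcd_eq_one.mpr ⟨hn.1, hm.1⟩, pow_gcd_eq_one.mpr ⟨hn.2, hm.2⟩⟩

lemma map (h : PowRelsHold n t) {φ : H t →* H s} (hφ : ∀ i, φ (of i) = of i) :
    PowRelsHold n s :=
  ⟨by simpa [hφ] using congrArg φ h.1, by simpa [hφ] using congrArg φ h.2⟩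

def lift (h : PowRelsHold n t) : H n →* H t :=
  toGroup (f := of) fun r hr => by
    simp only [geoRels, Set.mem_insert_iff, Set.mem_singleton_iff] at hr
    rcases hr with hr | hr | hr | hr | hr | rfl | rfl
    iterate 5 exact lift_of_eq_one (by simp [geoRels, hr])
    all_goals simp only [map_pow, map_mul, FreeGroup.lift_apply_of]
    exacts [h.1, h.2]

@[simp]
lemma lift_of (h : PowRelsHold n t) (i : Fin 3) : h.lift (of i) = of i :=
  toGroup.of _

end PowRelsHold

lemma heq'_of_dvd_of_powRelsHold {n t : ℕ} (hdvd : t ∣ n) (h : PowRelsHold t n) : HEq' n t := by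
  set π := ((powRelsHold_self t).of_dvd hdvd).lift
  have hσπ : h.lift.comp π = .id _ := ext fun i => by simp [π]
  have hπσ : π.comp h.lift = .id _ := ext fun i => by simp [π]
  exact ⟨π, PowRelsHold.lift_of _, Function.bijective_iff_has_inverse.mpr
    ⟨h.lift, DFunLike.congr_fun hσπ, DFunLike.congr_fun hπσ⟩⟩

end H

open H

lemma HEq'.powRelsHold {n t : ℕ} (h : HEq' n t) : PowRelsHold t n := by
  obtain ⟨φ, hφ, hinj, -⟩ := h
  exact ⟨hinj (by simpa [hφ] using (powRelsHold_self t).1),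
    hinj (by simpa [hφ] using (powRelsHold_self t).2)⟩

lemma HEq'.gcd_of_dvd {d k n : ℕ} (h : HEq' d k) (hn : n ∣ d) : HEq' n (k.gcd n) := by
  have hk : PowRelsHold k n := h.powRelsHold.map ((powRelsHold_self n).of_dvd hn).lift_of
  exact heq'_of_dvd_of_powRelsHold (Nat.gcd_dvd_right k n) (hk.gcd (powRelsHold_self n))

/-- If `H_d = H_k` with `d = k·p` for a prime `p`, and `z ∣ k` with
`p ∤ z`, then `k/z = gcd(k, d/z)` and consequently `H_{d/z} = H_{k/z}`. -/
theorem reduce_by_common_factor (d k p z : ℕ) (hp : p.Prime) (hd : d = k * p)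
    (hz : z ∣ k) (hpz : ¬ p ∣ z) (h : HEq' d k) :
    k / z = Nat.gcd k (d / z) ∧ HEq' (d / z) (k / z) := by
  have hgcd : k / z = k.gcd (d / z) :=
    hd ▸ div_eq_gcd_mul_div_of_coprime hz (hp.coprime_iff_not_dvd.mpr hpz)
  have hdvd : d / z ∣ d := Nat.div_dvd_of_dvd (hd ▸ dvd_mul_of_dvd_left hz p)
  exact ⟨hgcd, hgcd ▸ h.gcd_of_dvd hdvd⟩
end

section
/- In the group H_{2p} = ⟨a,b,c ∣ a², b², c², (ab)³, (ac)², (bc)^{2p}, (bac)^{2p}⟩ for an odd prime p: if (bc)^p = a then ab = 1, and if (bc)^p = aba then ba = 1. -/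
/-! Conjugating `bc` by the involution `b` inverts it, so `(bc)ⁿ b = b (bc)⁻ⁿ` and hence
`(bc)ⁿ b (bc)ⁿ = b` for every `n`. With `(bc)ᵖ = a` this says `aba = b`, whence
`(ab)³ = ab` and `ab = 1`; with `(bc)ᵖ = aba` it says `(ab)³ a = b`, whence `a = b` and
`ba = a² = 1`. -/

section Involutions

variable {G : Type*} [Group G] {a b c : G}

theorem mul_pow_mul_mul_pow_eq_self (hb : b ^ 2 = 1) (hc : c ^ 2 = 1) (n : ℕ) :
    (b * c) ^ n * b * (b * c) ^ n = b := by
  have hb' : b⁻¹ = b := inv_eq_of_mul_eq_one_right (by rw [← sq, hb])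
  have hc' : c⁻¹ = c := inv_eq_of_mul_eq_one_right (by rw [← sq, hc])
  have hinv : b * (b * c) * b⁻¹ = (b * c)⁻¹ := by
    rw [mul_inv_rev, hc', ← mul_assoc b b c, ← sq, hb, one_mul]
  have hconj : b * (b * c) ^ n * b⁻¹ = ((b * c) ^ n)⁻¹ := by rw [← conj_pow, hinv, inv_pow]
  calc (b * c) ^ n * b * (b * c) ^ n
      = b⁻¹ * (b * (b * c) ^ n * b⁻¹) * b ^ 2 * (b * c) ^ n := by group
    _ = b := by rw [hconj, hb, hb']; group

theorem mul_eq_one_of_mul_pow_three_eq_one_of_mul_mul_eq (hb : b ^ 2 = 1)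
    (hab : (a * b) ^ 3 = 1) (haba : a * b * a = b) : a * b = 1 := by
  calc a * b = (a * b * a) * b * (a * b) := by rw [haba, ← sq b, hb, one_mul]
    _ = (a * b) ^ 3 := by simp only [pow_succ, pow_zero, one_mul, mul_assoc]
    _ = 1 := hab

theorem mul_eq_one_of_mul_pow_three_eq_one_of_mul_mul_mul_eq (ha : a ^ 2 = 1)
    (hab : (a * b) ^ 3 = 1) (habab : a * b * a * b * (a * b * a) = b) : b * a = 1 := by
  have hba : b = a := by
    calc b = a * b * a * b * (a * b * a) := habab.symm
      _ = (a * b) ^ 3 * a := by simp only [pow_succ, pow_zero, one_mul, mul_assoc]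
      _ = a := by rw [hab, one_mul]
  rw [hba, ← sq, ha]

end Involutions

namespace H

variable (d : ℕ)

theorem of_zero_sq : (PresentedGroup.of 0 : H d) ^ 2 = 1 := by
  simpa [PresentedGroup.of] using
    PresentedGroup.one_of_mem (show FreeGroup.of 0 ^ 2 ∈ geoRels d by simp [geoRels])

theorem of_one_sq : (PresentedGroup.of 1 : H d) ^ 2 = 1 := by
  simpa [PresentedGroup.of] using
    PresentedGroup.one_of_mem (show FreeGroup.of 1 ^ 2 ∈ geoRels d by simp [geoRels])

theorem of_two_sq : (PresentedGroup.of 2 : H d) ^ 2 = 1 := by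
  simpa [PresentedGroup.of] using
    PresentedGroup.one_of_mem (show FreeGroup.of 2 ^ 2 ∈ geoRels d by simp [geoRels])

theorem of_zero_mul_of_one_pow_three :
    (PresentedGroup.of 0 * PresentedGroup.of 1 : H d) ^ 3 = 1 := by
  simpa [PresentedGroup.of] using PresentedGroup.one_of_mem
    (show (FreeGroup.of 0 * FreeGroup.of 1) ^ 3 ∈ geoRels d by simp [geoRels])

end H

theorem H2p_bc_pow_p_cases_general (p : ℕ) :
    (((PresentedGroup.of 1 * PresentedGroup.of 2 : H (2 * p))^p =
        PresentedGroup.of 0) →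
      (PresentedGroup.of 0 * PresentedGroup.of 1 : H (2 * p)) = 1) ∧
    (((PresentedGroup.of 1 * PresentedGroup.of 2 : H (2 * p))^p =
        PresentedGroup.of 0 * PresentedGroup.of 1 * PresentedGroup.of 0) →
      (PresentedGroup.of 1 * PresentedGroup.of 0 : H (2 * p)) = 1) := by
  have hsandwich := mul_pow_mul_mul_pow_eq_self (H.of_one_sq (2 * p)) (H.of_two_sq _) p
  refine ⟨fun h => ?_, fun h => ?_⟩
  · rw [h] at hsandwich
    exact mul_eq_one_of_mul_pow_three_eq_one_of_mul_mul_eq (H.of_one_sq _)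
      (H.of_zero_mul_of_one_pow_three _) hsandwich
  · rw [h] at hsandwich
    exact mul_eq_one_of_mul_pow_three_eq_one_of_mul_mul_mul_eq (H.of_zero_sq _)
      (H.of_zero_mul_of_one_pow_three _) hsandwich

/-- In `H_{2p}` for an odd prime `p` (with `a = of 0`, `b = of 1`,
`c = of 2`): if `(bc)^p = a` then `ab = 1`, and if `(bc)^p = aba` then `ba = 1`. -/
theorem H2p_bc_pow_p_cases (p : ℕ) (hp : p.Prime) (hodd : Odd p) :
    (((PresentedGroup.of 1 * PresentedGroup.of 2 : H (2 * p))^p =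
        PresentedGroup.of 0) →
      (PresentedGroup.of 0 * PresentedGroup.of 1 : H (2 * p)) = 1) ∧
    (((PresentedGroup.of 1 * PresentedGroup.of 2 : H (2 * p))^p =
        PresentedGroup.of 0 * PresentedGroup.of 1 * PresentedGroup.of 0) →
      (PresentedGroup.of 1 * PresentedGroup.of 0 : H (2 * p)) = 1) :=
  H2p_bc_pow_p_cases_general p
end

section
/- Let (F, α, β, γ) be a surface (α, β, γ fixed-point-free involutions on F with ⟨α,β,γ⟩ transitive, αβ having only 3-cycles and αγ only 2-cycles), with corner voltage assignment v : F → B (meaning v(β.x) = v(x)⁻¹ for all x). Define on F × B: α̂.(x,g) = (α.x, g), β̂.(x,g) = (β.x, v(x)g), γ̂.(x,g) = (γ.x, g). Then α̂β̂ consists only of 3-cycles if and only if v(βα.x)·v(αβ.x)·v(x) = 1 for all x ∈ F. -/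
/-- `(F, α, β, γ)` is a surface: `α`, `β`, `γ` are fixed-point-free involutions,
`⟨α,β,γ⟩` acts transitively on `F`, `αβ` consists only of 3-cycles, and `αγ`
consists only of 2-cycles. -/
def IsSurface {F : Type*} (α β γ : Equiv.Perm F) : Prop :=
  (α * α = 1 ∧ ∀ x, α x ≠ x) ∧
  (β * β = 1 ∧ ∀ x, β x ≠ x) ∧
  (γ * γ = 1 ∧ ∀ x, γ x ≠ x) ∧
  (∀ x y : F, ∃ g ∈ Subgroup.closure ({α, β, γ} : Set (Equiv.Perm F)), g x = y) ∧
  (∀ x, (α * β) ((α * β) ((α * β) x)) = x ∧ (α * β) x ≠ x) ∧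
  (∀ x, (α * γ) ((α * γ) x) = x ∧ (α * γ) x ≠ x)

/-- For a surface `(F, α, β, γ)` with corner voltage assignment
`v : F → B` (i.e. `v(β.x) = v(x)⁻¹`), the lifted permutation `α̂β̂` on `F × B`,
`(x, g) ↦ (α(β x), v(x)·g)`, consists only of 3-cycles iff
`v(βα.x) · v(αβ.x) · v(x) = 1` for all `x`. -/
theorem lift_three_cycles_iff {F B : Type*} [Group B] (α β γ : Equiv.Perm F)
    (hS : IsSurface α β γ) (v : F → B) (hv : ∀ x, v (β x) = (v x)⁻¹) :
    (∀ p : F × B,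
        (let ab : F × B → F × B := fun q => (α (β q.1), v q.1 * q.2)
         ab (ab (ab p)) = p ∧ ab p ≠ p)) ↔
      (∀ x : F, v (β (α x)) * v (α (β x)) * v x = 1) := by
  obtain ⟨⟨hα2, hα⟩, ⟨hβ2, hβ⟩, _, _, h3, _⟩ := hS
  have hαα : ∀ x, α (α x) = x := fun x => by
    have := congrArg (fun p => p x) hα2; simpa using this
  have hββ : ∀ x, β (β x) = x := fun x => by
    have := congrArg (fun p => p x) hβ2; simpa using this
  have h3' : ∀ x, α (β (α (β (α (β x))))) = x := fun x => by
    have := (h3 x).1; simpa using this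
  -- (αβ)² x = β (α x)
  have hsq : ∀ x, α (β (α (β x))) = β (α x) := fun x => by
    have h1 : α (β (α (β (α (β x))))) = α (β (β (α x))) := by
      rw [hββ, h3', hαα]
    exact β.injective (α.injective h1)
  constructor
  · intro h x
    have := (h (x, 1)).1
    simp only [h3' x, hsq x] at this
    have h2 := congrArg Prod.snd this
    simpa [mul_assoc] using h2
  · intro h p
    refine ⟨?_, ?_⟩
    · simp only [h3' p.1, hsq p.1]
      have : v (β (α p.1)) * (v (α (β p.1)) * (v p.1 * p.2)) = p.2 := by
        rw [← mul_assoc, ← mul_assoc, h, one_mul]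
      rw [this, hββ, hαα]
    · intro hc
      have := congrArg Prod.fst hc
      exact (h3 p.1).2 (by simpa using this)
end
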